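/- arXiv:2111.12005 — 6 statements merged into one kernel-verified Lean document; each statement's English description precedes it below -/
import Mathlib

section
/- Let G and H be locally compact second countable Hausdorff topological groups and let θ : G → H be a continuous homomorphism which is a strict morphism, i.e. the induced continuous bijection G/ker θ → θ(G) is a homeomorphism, where θ(G) carries the subspace topology inherited from H (consequently θ(G) is a locally compact, hence closed, subgroup of H). Let μ be a left Haar measure on G, ν a left Haar measure on θ(G), and λ a left Haar measure on ker θ. Then there exists a real constant c with 0 < c < ∞ such that μ(θ⁻¹(E)) = c · λ(ker θ) · ν(E) for every Borel set E ⊆ θ(G). -/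
/-!
Let `q : G → θ(G)` be the corestriction of `θ`, so that `θ⁻¹(E) = q⁻¹(E)`. Applying Fubini
on `G × θ(G)` to `{(g, x) | x⁻¹ q(g) ∈ E}` shows that `q⁻¹(E)` is `μ`-null exactly when `E`
is `ν`-null.
If `ker θ` is compact, strictness makes `q` proper, so `q_* μ` is a Haar measure on `θ(G)`,
hence a multiple of `ν`, while `λ(ker θ)` is finite and positive.
If `ker θ` is not compact, `λ(ker θ) = ∞`, and a `ker θ`-invariant set of positive finite
measure is impossible: it would contain a compact set `W` of positive measure and
arbitrarily many pairwise disjoint translates `k • W`, `k ∈ ker θ`.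
-/

open MeasureTheory Set
open scoped Pointwise

theorem QuotientGroup.isProperMap_mk_of_isCompact {G : Type*} [Group G] [TopologicalSpace G]
    [IsTopologicalGroup G] {N : Subgroup G} (hN : IsCompact (N : Set G)) :
    IsProperMap ((↑) : G → G ⧸ N) := by
  refine isProperMap_iff_isClosedMap_and_compact_fibers.2
    ⟨continuous_mk, isClosedMap_coe hN, fun y => ?_⟩
  obtain ⟨g, rfl⟩ := mk_surjective y
  rw [← image_singleton, preimage_image_mk_eq_mul, singleton_mul]
  exact hN.image (continuous_const_mul g)

theorem Subgroup.exists_mem_disjoint_smul_of_not_isCompact {G : Type*} [Group G]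
    [TopologicalSpace G] [IsTopologicalGroup G] {K : Subgroup G} (hKc : IsClosed (K : Set G))
    (hK : ¬IsCompact (K : Set G)) {C L : Set G} (hC : IsCompact C) (hL : IsCompact L) :
    ∃ k ∈ K, Disjoint C (k • L) := by
  obtain ⟨k, hkK, hk⟩ : ∃ k ∈ K, k ∉ C * L⁻¹ := by
    by_contra! h
    exact hK ((hC.mul hL.inv).of_isClosed_subset hKc h)
  refine ⟨k, hkK, disjoint_left.2 ?_⟩
  rintro _ ha ⟨b, hb, rfl⟩
  exact hk ⟨k • b, ha, b⁻¹, by simpa, mul_inv_cancel_right k b⟩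

theorem measure_eq_top_of_smul_subset {G : Type*} [Group G] [TopologicalSpace G]
    [IsTopologicalGroup G] [T2Space G] [MeasurableSpace G] [BorelSpace G] (μ : Measure G)
    [μ.IsMulLeftInvariant] [μ.InnerRegularCompactLTTop] {K : Subgroup G}
    (hKc : IsClosed (K : Set G)) (hK : ¬IsCompact (K : Set G)) {A : Set G}
    (hA : MeasurableSet A) (hKA : ∀ k ∈ K, k • A ⊆ A) (hA0 : μ A ≠ 0) : μ A = ⊤ := by
  by_contra hAtop
  obtain ⟨W, hWA, hW, hW0⟩ := hA.exists_lt_isCompact_of_ne_top hAtop (pos_iff_ne_zero.2 hA0)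
  have hpack : ∀ n : ℕ, ∃ L ⊆ A, IsCompact L ∧ n * μ W ≤ μ L := by
    intro n
    induction n with
    | zero => exact ⟨∅, empty_subset _, isCompact_empty, by simp⟩
    | succ n ih =>
      obtain ⟨L, hLA, hL, hnL⟩ := ih
      obtain ⟨k, hkK, hdisj⟩ := K.exists_mem_disjoint_smul_of_not_isCompact hKc hK hL hW
      refine ⟨L ∪ k • W, union_subset hLA ((smul_set_mono hWA).trans (hKA k hkK)),
        hL.union (hW.smul k), ?_⟩
      rw [measure_union hdisj (hW.smul k).measurableSet, measure_smul, Nat.cast_succ, add_one_mul]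
      gcongr
  obtain ⟨n, hn⟩ := ENNReal.exists_nat_gt (ENNReal.div_lt_top hAtop hW0.ne').ne
  obtain ⟨L, hLA, -, hnL⟩ := hpack n
  have hWtop : μ W ≠ ⊤ := ne_top_of_le_ne_top hAtop (measure_mono hWA)
  have hlt : μ A < n * μ W := (ENNReal.div_lt_iff (.inl hW0.ne') (.inl hWtop)).1 hn
  exact (hlt.trans_le (hnL.trans (measure_mono hLA))).false

section Fubini

variable {G K : Type*} [Group G] [MeasurableSpace G] [MeasurableMul G]
  [Group K] [MeasurableSpace K] [MeasurableMul₂ K] [MeasurableInv K]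
  (μ : Measure G) (ν : Measure K) [SFinite μ] [SFinite ν]
  [μ.IsMulLeftInvariant] [ν.IsMulLeftInvariant]
  {q : G →* K} (hq : Measurable q) (hsurj : Function.Surjective q)
  {S : Set K} (hS : MeasurableSet S)
include hq hsurj hS

theorem MonoidHom.measure_preimage_mul_measure_univ :
    μ (q ⁻¹' S) * ν univ = ν S⁻¹ * μ univ := by
  set A : Set (G × K) := (fun p => p.2⁻¹ * q p.1) ⁻¹' S
  have hA : MeasurableSet A :=
    (measurable_snd.inv.mul (hq.comp measurable_fst)) hS
  have hslice_G : ∀ x : K, μ ((fun g => (g, x)) ⁻¹' A) = μ (q ⁻¹' S) := fun x => by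
    obtain ⟨g₀, rfl⟩ := hsurj x
    have : (fun g => (g, q g₀)) ⁻¹' A = (fun g => g₀⁻¹ * g) ⁻¹' (q ⁻¹' S) := by
      ext g
      simp [A]
    rw [this, measure_preimage_mul]
  have hslice_K : ∀ g : G, ν (Prod.mk g ⁻¹' A) = ν S⁻¹ := fun g => by
    have : Prod.mk g ⁻¹' A = (fun x => (q g)⁻¹ * x) ⁻¹' S⁻¹ := by
      ext x
      simp [A]
    rw [this, measure_preimage_mul]
  calc μ (q ⁻¹' S) * ν univ = (μ.prod ν) A := by
        rw [Measure.prod_apply_symm hA]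
        simp only [hslice_G, lintegral_const]
    _ = ν S⁻¹ * μ univ := by
        rw [Measure.prod_apply hA]
        simp only [hslice_K, lintegral_const]

theorem MonoidHom.measure_preimage_eq_zero_iff [NeZero μ] [NeZero ν] :
    μ (q ⁻¹' S) = 0 ↔ ν S = 0 := by
  have h := q.measure_preimage_mul_measure_univ μ ν hq hsurj hS
  rw [← measure_inv_null ν]
  constructor <;> intro h0 <;> simpa [h0, NeZero.ne] using h

end Fubini

theorem MonoidHom.measure_preimage_eq_top_mul_of_not_isCompact_ker {G K : Type*} [Group G]
    [TopologicalSpace G] [IsTopologicalGroup G] [T2Space G] [MeasurableSpace G] [BorelSpace G]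
    [Group K] [MeasurableSpace K] [MeasurableMul₂ K] [MeasurableInv K]
    (μ : Measure G) (ν : Measure K) [SFinite μ] [SFinite ν] [NeZero μ] [NeZero ν]
    [μ.IsMulLeftInvariant] [μ.InnerRegularCompactLTTop] [ν.IsMulLeftInvariant]
    {q : G →* K} (hq : Measurable q) (hsurj : Function.Surjective q)
    (hKc : IsClosed (q.ker : Set G)) (hK : ¬IsCompact (q.ker : Set G))
    {E : Set K} (hE : MeasurableSet E) : μ (q ⁻¹' E) = ⊤ * ν E := by
  have hnull := q.measure_preimage_eq_zero_iff μ ν hq hsurj hE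
  by_cases hE0 : ν E = 0
  · rw [hE0, mul_zero, hnull, hE0]
  rw [ENNReal.top_mul hE0]
  refine measure_eq_top_of_smul_subset μ hKc hK (hq hE) ?_ (mt hnull.1 hE0)
  rintro k hk _ ⟨x, hx, rfl⟩
  simpa [q.mem_ker.1 hk] using hx

theorem MonoidHom.exists_measure_preimage_eq_smul_of_isProperMap {G K : Type*} [Group G]
    [TopologicalSpace G] [IsTopologicalGroup G] [MeasurableSpace G] [BorelSpace G]
    [Group K] [TopologicalSpace K] [IsTopologicalGroup K] [LocallyCompactSpace K]
    [SecondCountableTopology K] [T2Space K] [MeasurableSpace K] [BorelSpace K]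
    (μ : Measure G) (ν : Measure K) [μ.IsHaarMeasure] [ν.IsHaarMeasure]
    {q : G →* K} (hq : IsProperMap q) (hsurj : Function.Surjective q) :
    ∃ c : NNReal, 0 < c ∧ ∀ E, MeasurableSet E → μ (q ⁻¹' E) = c * ν E := by
  have := Measure.isHaarMeasure_map μ q hq.continuous hsurj
    (isProperMap_iff_tendsto_cocompact.mp hq).2
  refine ⟨(μ.map q).haarScalarFactor ν,
    Measure.haarScalarFactor_pos_of_isHaarMeasure (μ.map q) ν, fun E hE => ?_⟩
  rw [← Measure.map_apply hq.continuous.measurable hE]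
  exact congrArg (· E) (Measure.isMulLeftInvariant_eq_smul (μ.map q) ν)

theorem strict_morphism_haar_preimage_general {G H : Type*}
    [Group G] [TopologicalSpace G] [IsTopologicalGroup G] [LocallyCompactSpace G]
    [SecondCountableTopology G] [T2Space G] [MeasurableSpace G] [BorelSpace G]
    [Group H] [TopologicalSpace H] [IsTopologicalGroup H]
    [SecondCountableTopology H] [T2Space H] [MeasurableSpace H] [BorelSpace H]
    (θ : G →* H) (hθ : Continuous θ)
    (hstrict : IsHomeomorph (⇑(QuotientGroup.quotientKerEquivRange θ)))
    (μ : Measure G) (ν : Measure θ.range) (lam : Measure θ.ker)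
    [μ.IsHaarMeasure] [ν.IsHaarMeasure]
    [lam.IsHaarMeasure] :
    ∃ c : ENNReal, 0 < c ∧ c < ⊤ ∧
      ∀ E : Set θ.range, MeasurableSet E →
        μ (⇑θ ⁻¹' (Subtype.val '' E)) = c * lam Set.univ * ν E := by
  set q : G →* θ.range := θ.rangeRestrict
  have hpre (E : Set θ.range) : ⇑θ ⁻¹' (Subtype.val '' E) = q ⁻¹' E :=
    congrArg (q ⁻¹' ·) (Subtype.val_injective.preimage_image E)
  simp_rw [hpre]
  let e : G ⧸ θ.ker ≃ₜ θ.range := hstrict.homeomorph _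
  have : LocallyCompactSpace θ.range := e.locallyCompactSpace_iff.mp inferInstance
  have : SecondCountableTopology θ.range := TopologicalSpace.Subtype.secondCountableTopology _
  by_cases hK : IsCompact (θ.ker : Set G)
  · have : CompactSpace θ.ker := isCompact_iff_compactSpace.mp hK
    obtain ⟨c, hc, hcE⟩ := q.exists_measure_preimage_eq_smul_of_isProperMap μ ν
      (e.isProperMap.comp (QuotientGroup.isProperMap_mk_of_isCompact hK))
      θ.rangeRestrict_surjective
    have hlam : lam univ ≠ ⊤ := measure_ne_top lam univ
    have hlam0 : lam univ ≠ 0 := (NeZero.ne' _).symm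
    refine ⟨c / lam univ, ENNReal.div_pos (by exact_mod_cast hc.ne') hlam,
      ENNReal.div_lt_top ENNReal.coe_ne_top hlam0, fun E hE => ?_⟩
    rw [ENNReal.div_mul_cancel hlam0 hlam, hcE E hE]
  · have hKc : IsClosed (θ.ker : Set G) := θ.coe_ker ▸ isClosed_singleton.preimage hθ
    have : NoncompactSpace θ.ker := ⟨fun h => hK (isCompact_iff_isCompact_univ.mpr h)⟩
    have : LocallyCompactSpace θ.ker := hKc.locallyCompactSpace
    refine ⟨1, one_pos, ENNReal.one_lt_top, fun E hE => ?_⟩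
    rw [one_mul, measure_univ_of_isMulLeftInvariant lam]
    exact q.measure_preimage_eq_top_mul_of_not_isCompact_ker μ ν
      (hθ.subtype_mk _).measurable θ.rangeRestrict_surjective
      (by rwa [θ.ker_rangeRestrict]) (by rwa [θ.ker_rangeRestrict]) hE

/-- If `θ : G → H` is a continuous strict morphism (the induced bijection
`G/ker θ → θ(G)` is a homeomorphism), `μ`, `ν`, `lam` are Haar measures on `G`, `θ(G)`,
`ker θ`, then there is a finite positive constant `c` with
`μ(θ⁻¹(E)) = c · lam(ker θ) · ν(E)` for all Borel `E ⊆ θ(G)`. -/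
theorem strict_morphism_haar_preimage {G H : Type*}
    [Group G] [TopologicalSpace G] [IsTopologicalGroup G] [LocallyCompactSpace G]
    [SecondCountableTopology G] [T2Space G] [MeasurableSpace G] [BorelSpace G]
    [Group H] [TopologicalSpace H] [IsTopologicalGroup H] [LocallyCompactSpace H]
    [SecondCountableTopology H] [T2Space H] [MeasurableSpace H] [BorelSpace H]
    (θ : G →* H) (hθ : Continuous θ)
    (hstrict : IsHomeomorph (⇑(QuotientGroup.quotientKerEquivRange θ)))
    (μ : Measure G) (ν : Measure θ.range) (lam : Measure θ.ker)
    [μ.IsHaarMeasure] [μ.Regular] [ν.IsHaarMeasure] [ν.Regular]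
    [lam.IsHaarMeasure] [lam.Regular] :
    ∃ c : ENNReal, 0 < c ∧ c < ⊤ ∧
      ∀ E : Set θ.range, MeasurableSet E →
        μ (⇑θ ⁻¹' (Subtype.val '' E)) = c * lam Set.univ * ν E :=
  strict_morphism_haar_preimage_general θ hθ hstrict μ ν lam
end

section
/- Let G and H be locally compact second countable Hausdorff topological groups and let θ : G → H be a continuous homomorphism such that the image θ(G) is an open subgroup of H. Then θ is an open map: for every open set U ⊆ G, the image θ(U) is open in H. -/
/-! The open subgroup `θ(G)` of a locally compact Hausdorff group is a Baire space and `G` is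
σ-compact, so by the open mapping theorem for topological groups the corestriction `G → θ(G)` is
open; composing with the inclusion of an open subset keeps it open. -/

theorem MonoidHom.isOpenMap_of_sigmaCompact_of_isOpen_range {G H : Type*}
    [Group G] [TopologicalSpace G] [IsTopologicalGroup G] [SigmaCompactSpace G]
    [Group H] [TopologicalSpace H] [IsTopologicalGroup H] [BaireSpace H] [T2Space H]
    (f : G →* H) (hf : Continuous f) (hrange : IsOpen (Set.range f)) : IsOpenMap f := by
  have hrange' : IsOpen (f.range : Set H) := hrange
  have : BaireSpace f.range := hrange'.baireSpace
  have hcorestrict : IsOpenMap f.rangeRestrict :=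
    f.rangeRestrict.isOpenMap_of_sigmaCompact f.rangeRestrict_surjective (hf.subtype_mk _)
  exact hrange'.isOpenMap_subtype_val.comp hcorestrict

theorem isOpenMap_of_open_range_general {G H : Type*}
    [Group G] [TopologicalSpace G] [IsTopologicalGroup G] [LocallyCompactSpace G]
    [SecondCountableTopology G]
    [Group H] [TopologicalSpace H] [IsTopologicalGroup H] [LocallyCompactSpace H]
    [T2Space H]
    (θ : G →* H) (hθ : Continuous θ) (hopen : IsOpen (Set.range θ)) :
    IsOpenMap θ :=
  θ.isOpenMap_of_sigmaCompact_of_isOpen_range hθ hopen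

/-- A continuous homomorphism between locally compact second countable groups with open
image is an open map. -/
theorem isOpenMap_of_open_range {G H : Type*}
    [Group G] [TopologicalSpace G] [IsTopologicalGroup G] [LocallyCompactSpace G]
    [SecondCountableTopology G] [T2Space G]
    [Group H] [TopologicalSpace H] [IsTopologicalGroup H] [LocallyCompactSpace H]
    [SecondCountableTopology H] [T2Space H]
    (θ : G →* H) (hθ : Continuous θ) (hopen : IsOpen (Set.range θ)) :
    IsOpenMap θ :=
  isOpenMap_of_open_range_general θ hθ hopen
end

section
/- Let G and H be locally compact second countable Hausdorff topological groups with left Haar measures μ and ν respectively, and let θ : G → H be a continuous homomorphism. Then the pushforward measure θ_*(μ) is absolutely continuous with respect to ν if and only if the image θ(G) is an open subgroup of H. -/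
open MeasureTheory Measure Set

/-!
If `θ_* μ ≪ ν`, the range of `θ` has positive Haar measure, and a subgroup of positive
Haar measure is open by Steinhaus' theorem. Conversely, if the range is open and `ν E = 0`,
Fubini applied to `{(h, g) | θ g * h ∈ E}` shows that `μ {g | θ g * h ∈ E} = 0` for `ν`-a.e. `h`,
so for some `h = θ g₀` in the (non-null) open range; that set is the right translate of
`θ ⁻¹' E` by `g₀⁻¹`, hence `μ (θ ⁻¹' E) = 0`.
-/

theorem IsSigmaCompact.measurableSet {X : Type*} [TopologicalSpace X] [T2Space X]
    [MeasurableSpace X] [OpensMeasurableSpace X] {s : Set X} (hs : IsSigmaCompact s) :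
    MeasurableSet s := by
  obtain ⟨K, hK, rfl⟩ := hs
  exact .iUnion fun n => (hK n).measurableSet

theorem Subgroup.isOpen_of_measure_ne_zero {H : Type*} [Group H] [TopologicalSpace H]
    [IsTopologicalGroup H] [LocallyCompactSpace H] [MeasurableSpace H] [BorelSpace H]
    (ν : Measure H) [ν.IsHaarMeasure] [ν.InnerRegular] (K : Subgroup H)
    (hK : MeasurableSet (K : Set H)) (hνK : ν K ≠ 0) : IsOpen (K : Set H) := by
  refine K.isOpen_of_mem_nhds <| Filter.mem_of_superset
    (div_mem_nhds_one_of_haar_pos ν K hK hνK.bot_lt) ?_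
  rintro _ ⟨x, hx, y, hy, rfl⟩
  exact K.div_mem hx hy

theorem ae_measure_preimage_mul_right_eq_zero {G H : Type*} [MeasurableSpace G]
    [Group H] [MeasurableSpace H] [MeasurableMul₂ H] {μ : Measure G} {ν : Measure H}
    [SFinite μ] [SFinite ν] [ν.IsMulLeftInvariant] {f : G → H} (hf : Measurable f)
    {E : Set H} (hE : MeasurableSet E) (hνE : ν E = 0) :
    ∀ᵐ h ∂ν, μ ((fun g => f g * h) ⁻¹' E) = 0 := by
  have hs : MeasurableSet {p : H × G | f p.2 * p.1 ∈ E} :=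
    (hf.comp measurable_snd).mul measurable_fst hE
  refine (measure_prod_null (μ := ν) (ν := μ) hs).1 ?_
  rw [prod_apply_symm hs]
  have hsection : ∀ g, ν ((fun h => (h, g)) ⁻¹' {p : H × G | f p.2 * p.1 ∈ E}) = 0 :=
    fun g => (measure_preimage_mul ν (f g) E).trans hνE
  simp only [hsection, lintegral_zero]

theorem map_absolutelyContinuous_of_isOpen_range {G H : Type*} [Group G] [MeasurableSpace G]
    [MeasurableMul₂ G] [MeasurableInv G] [Group H] [TopologicalSpace H] [MeasurableSpace H]
    [MeasurableMul₂ H] {μ : Measure G} {ν : Measure H} [SFinite μ] [μ.IsMulLeftInvariant]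
    [SFinite ν] [ν.IsMulLeftInvariant] [ν.IsOpenPosMeasure] {θ : G →* H} (hθ : Measurable θ)
    (hopen : IsOpen (range θ)) : map θ μ ≪ ν := by
  refine AbsolutelyContinuous.mk fun E hE hνE => ?_
  obtain ⟨_, ⟨g₀, rfl⟩, hg₀⟩ := exists_mem_of_measure_ne_zero_of_ae
    (hopen.measure_ne_zero ν (range_nonempty θ))
    (ae_restrict_of_ae (ae_measure_preimage_mul_right_eq_zero (μ := μ) hθ hE hνE))
  have htranslate : (fun g => θ g * θ g₀) ⁻¹' E = (fun g => g * g₀) ⁻¹' (θ ⁻¹' E) := by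
    ext g; simp [map_mul]
  rwa [map_apply hθ hE, ← measure_mul_right_null μ g₀, ← htranslate]

theorem pushforward_absolutelyContinuous_iff_open_range_general {G H : Type*}
    [Group G] [TopologicalSpace G] [IsTopologicalGroup G] [LocallyCompactSpace G]
    [SecondCountableTopology G] [MeasurableSpace G] [BorelSpace G]
    [Group H] [TopologicalSpace H] [IsTopologicalGroup H] [LocallyCompactSpace H]
    [SecondCountableTopology H] [T2Space H] [MeasurableSpace H] [BorelSpace H]
    (μ : Measure G) (ν : Measure H) [μ.IsHaarMeasure]
    [ν.IsHaarMeasure]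
    (θ : G →* H) (hθ : Continuous θ) :
    Measure.map θ μ ≪ ν ↔ IsOpen (Set.range θ) := by
  refine ⟨fun hac => ?_, map_absolutelyContinuous_of_isOpen_range hθ.measurable⟩
  have hmeas : MeasurableSet (range θ) := (isSigmaCompact_range hθ).measurableSet
  have hpos : ν (range θ) ≠ 0 := fun hnull => by
    have := hac hnull
    rw [map_apply hθ.measurable hmeas, preimage_range] at this
    exact NeZero.ne (μ univ) this
  rw [← MonoidHom.coe_range] at hmeas hpos ⊢
  exact θ.range.isOpen_of_measure_ne_zero ν hmeas hpos

/-- For a continuous homomorphism `θ : G → H` of locally compact second countable groups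
with Haar measures `μ`, `ν`, the pushforward `θ_*(μ)` is absolutely continuous with respect
to `ν` iff `θ(G)` is an open subgroup of `H`. -/
theorem pushforward_absolutelyContinuous_iff_open_range {G H : Type*}
    [Group G] [TopologicalSpace G] [IsTopologicalGroup G] [LocallyCompactSpace G]
    [SecondCountableTopology G] [T2Space G] [MeasurableSpace G] [BorelSpace G]
    [Group H] [TopologicalSpace H] [IsTopologicalGroup H] [LocallyCompactSpace H]
    [SecondCountableTopology H] [T2Space H] [MeasurableSpace H] [BorelSpace H]
    (μ : Measure G) (ν : Measure H) [μ.IsHaarMeasure] [μ.Regular]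
    [ν.IsHaarMeasure] [ν.Regular]
    (θ : G →* H) (hθ : Continuous θ) :
    Measure.map θ μ ≪ ν ↔ IsOpen (Set.range θ) :=
  pushforward_absolutelyContinuous_iff_open_range_general μ ν θ hθ
end

section
/- Let G and H be locally compact second countable Hausdorff topological groups with left Haar measures μ and ν respectively, and let θ : G → H be a continuous homomorphism such that the pushforward θ_*(μ) is absolutely continuous with respect to ν. If ker θ is compact, then θ_*(μ), restricted to the (open) subgroup θ(G) of H, is a left Haar measure on θ(G): that is, the measure on θ(G) (with its subspace topology) given by E ↦ μ(θ⁻¹(E)) for Borel E ⊆ θ(G) is a nonzero, left-invariant, regular Borel measure that is finite on compact sets. -/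
open MeasureTheory Set Filter Pointwise Topology

/-!
The image `θ(K)` of a compact neighbourhood `K` of `1` has positive `θ_*(μ)`-measure, hence
positive Haar measure, so by Steinhaus `θ(K) / θ(K)` is a neighbourhood of `1` inside the range
of `θ`, which is therefore an open subgroup. The corestriction of `θ` onto it is a continuous
surjection of σ-compact locally compact groups, hence open, and an open continuous homomorphism
with compact kernel is proper: a compact set is covered by the image of a compact set `L`, so its
preimage is a closed subset of `L * ker θ`. The pushforward of a Haar measure along a proper
continuous surjective homomorphism is Haar, and on a second countable locally compact group every
Haar measure is regular.
-/

theorem IsOpenMap.exists_isCompact_subset_image {X Y : Type*} [TopologicalSpace X]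
    [TopologicalSpace Y] [LocallyCompactSpace X] {f : X → Y} (hf : IsOpenMap f) {K : Set Y}
    (hK : IsCompact K) (hKf : K ⊆ range f) : ∃ L, IsCompact L ∧ K ⊆ f '' L := by
  have hnhds : ∀ y ∈ K, ∃ U, IsCompact U ∧ f '' U ∈ 𝓝 y := by
    rintro _ hy
    obtain ⟨x, rfl⟩ := hKf hy
    obtain ⟨U, hUc, hUx⟩ := exists_compact_mem_nhds x
    exact ⟨U, hUc, hf.image_mem_nhds hUx⟩
  choose! U hUc hUn using hnhds
  obtain ⟨t, htK, hcover⟩ := hK.elim_nhds_subcover (fun y => f '' U y) hUn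
  refine ⟨⋃ y ∈ t, U y, t.finite_toSet.isCompact_biUnion fun y hy => hUc y (htK y hy), ?_⟩
  simpa only [image_iUnion₂] using hcover

theorem MonoidHom.tendsto_cocompact_of_isCompact_ker {G H : Type*} [Group G] [TopologicalSpace G]
    [IsTopologicalGroup G] [LocallyCompactSpace G] [Group H] [TopologicalSpace H] [T2Space H]
    (f : G →* H) (hf : Continuous f) (hopen : IsOpenMap f) (hsurj : Function.Surjective f)
    (hker : IsCompact (f.ker : Set G)) : Tendsto f (cocompact G) (cocompact H) := by
  refine hasBasis_cocompact.tendsto_right_iff.2 fun K hK => ?_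
  obtain ⟨L, hL, hKL⟩ :=
    hopen.exists_isCompact_subset_image hK (hsurj.range_eq ▸ subset_univ K)
  have hpre : f ⁻¹' K ⊆ L * f.ker := by
    intro x hx
    obtain ⟨l, hl, hlx⟩ := hKL hx
    exact ⟨l, hl, l⁻¹ * x, by simp [MonoidHom.mem_ker, hlx], by group⟩
  exact ((hL.mul hker).of_isClosed_subset (hK.isClosed.preimage hf) hpre).compl_mem_cocompact

theorem Subgroup.isOpen_of_measure_pos {H : Type*} [Group H] [TopologicalSpace H]
    [IsTopologicalGroup H] [LocallyCompactSpace H] [MeasurableSpace H] [BorelSpace H]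
    (ν : Measure H) [ν.IsHaarMeasure] [ν.InnerRegular] (S : Subgroup H) {E : Set H}
    (hE : MeasurableSet E) (hpos : 0 < ν E) (hES : E ⊆ S) : IsOpen (S : Set H) :=
  S.isOpen_of_mem_nhds <| mem_of_superset (ν.div_mem_nhds_one_of_haar_pos E hE hpos) <| by
    simpa only [coe_div_coe] using div_subset_div hES hES

theorem MonoidHom.isOpen_range_of_map_absolutelyContinuous {G H : Type*} [Group G]
    [TopologicalSpace G] [LocallyCompactSpace G] [MeasurableSpace G] [OpensMeasurableSpace G]
    [Group H] [TopologicalSpace H] [IsTopologicalGroup H] [LocallyCompactSpace H] [T2Space H]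
    [MeasurableSpace H] [BorelSpace H] (μ : Measure G) [μ.IsOpenPosMeasure] (ν : Measure H)
    [ν.IsHaarMeasure] [ν.InnerRegular] (θ : G →* H) (hθ : Continuous θ)
    (habs : Measure.map θ μ ≪ ν) : IsOpen (θ.range : Set H) := by
  obtain ⟨K, hK, hK1⟩ := exists_compact_mem_nhds (1 : G)
  have hθK : MeasurableSet (θ '' K) := (hK.image hθ).measurableSet
  refine θ.range.isOpen_of_measure_pos ν hθK (habs.pos_mono ?_) (image_subset_range θ K)
  rw [Measure.map_apply hθ.measurable hθK]
  exact μ.measure_pos_of_mem_nhds hK1 |>.trans_le (measure_mono (subset_preimage_image θ K))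

theorem pushforward_isHaar_of_compact_ker_general {G H : Type*}
    [Group G] [TopologicalSpace G] [IsTopologicalGroup G] [LocallyCompactSpace G]
    [SecondCountableTopology G] [MeasurableSpace G] [BorelSpace G]
    [Group H] [TopologicalSpace H] [IsTopologicalGroup H] [LocallyCompactSpace H]
    [SecondCountableTopology H] [T2Space H] [MeasurableSpace H] [BorelSpace H]
    (μ : Measure G) (ν : Measure H) [μ.IsHaarMeasure]
    [ν.IsHaarMeasure]
    (θ : G →* H) (hθ : Continuous θ)
    (habs : Measure.map θ μ ≪ ν)
    (hker : IsCompact (θ.ker : Set G)) :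
    (Measure.map θ.rangeRestrict μ).IsHaarMeasure ∧
      (Measure.map θ.rangeRestrict μ).Regular := by
  have hopen := θ.isOpen_range_of_map_absolutelyContinuous μ ν hθ habs
  have : LocallyCompactSpace θ.range := hopen.isOpenEmbedding_subtypeVal.locallyCompactSpace
  have hcont : Continuous θ.rangeRestrict := hθ.subtype_mk _
  have hsurj := θ.rangeRestrict_surjective
  have hproper := θ.rangeRestrict.tendsto_cocompact_of_isCompact_ker hcont
    (θ.rangeRestrict.isOpenMap_of_sigmaCompact hsurj hcont) hsurj
    (by rwa [MonoidHom.ker_rangeRestrict])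
  have : SecondCountableTopology θ.range :=
    TopologicalSpace.Subtype.secondCountableTopology (θ.range : Set H)
  have hHaar := μ.isHaarMeasure_map θ.rangeRestrict hcont hsurj hproper
  exact ⟨hHaar, inferInstance⟩

/-- If `θ : G → H` is a continuous homomorphism with `θ_*(μ) ≪ ν` (Haar measures) and
compact kernel, then the pushforward of `μ` to the subgroup `θ(G)` (via the range
corestriction of `θ`) is a Haar measure on `θ(G)`: a nonzero left-invariant regular Borel
measure, finite on compact sets. -/
theorem pushforward_isHaar_of_compact_ker {G H : Type*}
    [Group G] [TopologicalSpace G] [IsTopologicalGroup G] [LocallyCompactSpace G]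
    [SecondCountableTopology G] [T2Space G] [MeasurableSpace G] [BorelSpace G]
    [Group H] [TopologicalSpace H] [IsTopologicalGroup H] [LocallyCompactSpace H]
    [SecondCountableTopology H] [T2Space H] [MeasurableSpace H] [BorelSpace H]
    (μ : Measure G) (ν : Measure H) [μ.IsHaarMeasure] [μ.Regular]
    [ν.IsHaarMeasure] [ν.Regular]
    (θ : G →* H) (hθ : Continuous θ)
    (habs : Measure.map θ μ ≪ ν)
    (hker : IsCompact (θ.ker : Set G)) :
    (Measure.map θ.rangeRestrict μ).IsHaarMeasure ∧
      (Measure.map θ.rangeRestrict μ).Regular :=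
  pushforward_isHaar_of_compact_ker_general μ ν θ hθ habs hker
end

section
/- Let G and H be locally compact second countable Hausdorff topological groups with left Haar measures μ and ν respectively, and let θ : G → H be a continuous homomorphism such that the pushforward θ_*(μ) is absolutely continuous with respect to ν. If ker θ is not compact, then μ(θ⁻¹(E)) ∈ {0, +∞} for every Borel set E ⊆ θ(G). -/
/-!
`θ⁻¹' E` is invariant under left translation by the closed non-compact subgroup `ker θ`.
If it had finite positive measure, inner regularity would give a compact `C ⊆ θ⁻¹' E` with
`μ C > 0`; since `ker θ` is not covered by finitely many translates of `C * C⁻¹`, one can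
choose `kₙ ∈ ker θ` with the translates `kₙ • C` pairwise disjoint, and these infinitely
many disjoint copies of `C` inside `θ⁻¹' E` force `μ (θ⁻¹' E) = ∞`.
-/

open MeasureTheory Pointwise

section

variable {G : Type*} [Group G] [TopologicalSpace G] [IsTopologicalGroup G]

theorem exists_seq_mem_pairwise_disjoint_smul {K C : Set G} (hKc : IsClosed K)
    (hK : ¬IsCompact K) (hC : IsCompact C) :
    ∃ k : ℕ → G, (∀ n, k n ∈ K) ∧ Pairwise fun m n => Disjoint (k m • C) (k n • C) := by
  refine exists_seq_of_forall_finset_exists' (· ∈ K) (fun a b => Disjoint (a • C) (b • C))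
    fun s _ => ?_
  have hcover : IsCompact (⋃ a ∈ s, a • (C * C⁻¹)) :=
    s.finite_toSet.isCompact_biUnion fun a _ => (hC.mul hC.inv).smul a
  obtain ⟨b, hbK, hb⟩ := Set.not_subset.mp fun h => hK (hcover.of_isClosed_subset hKc h)
  refine ⟨b, hbK, fun a ha => Set.disjoint_left.mpr ?_⟩
  rintro _ ⟨c, hc, rfl⟩ ⟨c', hc', hcc'⟩
  refine hb (Set.mem_biUnion ha ⟨c * c'⁻¹, Set.mul_mem_mul hc (Set.inv_mem_inv.mpr hc'), ?_⟩)
  simp only [smul_eq_mul] at hcc' ⊢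
  rw [← mul_assoc, ← hcc', mul_inv_cancel_right]

variable [T2Space G] [MeasurableSpace G] [BorelSpace G] (μ : Measure G) [μ.IsMulLeftInvariant]

theorem measure_eq_top_of_forall_smul_subset {K C A : Set G} (hKc : IsClosed K)
    (hK : ¬IsCompact K) (hC : IsCompact C) (hC₀ : μ C ≠ 0) (hCA : ∀ k ∈ K, k • C ⊆ A) :
    μ A = ⊤ := by
  obtain ⟨k, hkK, hdisj⟩ := exists_seq_mem_pairwise_disjoint_smul hKc hK hC
  refine top_le_iff.mp ?_
  calc ⊤ = ∑' _ : ℕ, μ C := (ENNReal.tsum_const_eq_top_of_ne_zero hC₀).symm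
    _ = ∑' n, μ (k n • C) := by simp only [measure_smul]
    _ = μ (⋃ n, k n • C) := (measure_iUnion hdisj fun n => (hC.smul (k n)).measurableSet).symm
    _ ≤ μ A := measure_mono (Set.iUnion_subset fun n => hCA (k n) (hkK n))

theorem measure_eq_zero_or_top_of_forall_smul_subset [μ.InnerRegularCompactLTTop] {K A : Set G}
    (hKc : IsClosed K) (hK : ¬IsCompact K) (hA : MeasurableSet A) (hKA : ∀ k ∈ K, k • A ⊆ A) :
    μ A = 0 ∨ μ A = ⊤ := by
  refine or_iff_not_imp_left.mpr fun hA₀ => by_contra fun hA_top => ?_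
  obtain ⟨C, hCA, hC, hμC⟩ := hA.exists_lt_isCompact_of_ne_top hA_top (pos_iff_ne_zero.mpr hA₀)
  exact hA_top <| measure_eq_top_of_forall_smul_subset μ hKc hK hC hμC.ne_bot
    fun k hk => (Set.smul_set_mono hCA).trans (hKA k hk)

end

theorem MonoidHom.smul_preimage_subset_of_mem_ker {G H : Type*} [Group G] [Group H]
    (θ : G →* H) (E : Set H) {k : G} (hk : k ∈ θ.ker) : k • (θ ⁻¹' E) ⊆ θ ⁻¹' E := by
  rintro _ ⟨a, ha, rfl⟩
  simpa [MonoidHom.mem_ker.mp hk] using ha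

theorem pushforward_zero_or_top_of_noncompact_ker_general {G H : Type*}
    [Group G] [TopologicalSpace G] [IsTopologicalGroup G]
    [T2Space G] [MeasurableSpace G] [BorelSpace G]
    [Group H] [TopologicalSpace H]
    [T2Space H] [MeasurableSpace H] [BorelSpace H]
    (μ : Measure G) [μ.IsHaarMeasure] [μ.Regular]
    (θ : G →* H) (hθ : Continuous θ)
    (hker : ¬ IsCompact (θ.ker : Set G)) :
    ∀ E : Set H, MeasurableSet E → E ⊆ Set.range θ →
      μ (⇑θ ⁻¹' E) = 0 ∨ μ (⇑θ ⁻¹' E) = ⊤ := by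
  intro E hE _
  exact measure_eq_zero_or_top_of_forall_smul_subset μ (isClosed_singleton.preimage hθ) hker
    (hE.preimage hθ.measurable) fun _ hk => θ.smul_preimage_subset_of_mem_ker E hk

/-- If `θ : G → H` is a continuous homomorphism with `θ_*(μ) ≪ ν` (Haar measures) and
non-compact kernel, then `μ(θ⁻¹(E)) ∈ {0, +∞}` for every Borel `E ⊆ θ(G)`. -/
theorem pushforward_zero_or_top_of_noncompact_ker {G H : Type*}
    [Group G] [TopologicalSpace G] [IsTopologicalGroup G] [LocallyCompactSpace G]
    [SecondCountableTopology G] [T2Space G] [MeasurableSpace G] [BorelSpace G]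
    [Group H] [TopologicalSpace H] [IsTopologicalGroup H] [LocallyCompactSpace H]
    [SecondCountableTopology H] [T2Space H] [MeasurableSpace H] [BorelSpace H]
    (μ : Measure G) (ν : Measure H) [μ.IsHaarMeasure] [μ.Regular]
    [ν.IsHaarMeasure] [ν.Regular]
    (θ : G →* H) (hθ : Continuous θ)
    (habs : Measure.map θ μ ≪ ν)
    (hker : ¬ IsCompact (θ.ker : Set G)) :
    ∀ E : Set H, MeasurableSet E → E ⊆ Set.range θ →
      μ (⇑θ ⁻¹' E) = 0 ∨ μ (⇑θ ⁻¹' E) = ⊤ :=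
  pushforward_zero_or_top_of_noncompact_ker_general μ θ hθ hker
end

section
/- Let H and K be complex Hilbert spaces and let M be a set of bounded linear operators from H to K. Suppose that the identity operator on H belongs to the closure, in the weak operator topology of B(H), of the linear span of the set { m* ∘ n : m, n ∈ M } (where m* denotes the Hilbert-space adjoint of m). If x is a bounded operator on H such that m ∘ x ∘ n* = 0 for all m, n ∈ M, then x = 0. -/
/-! Since the identity is a weak-operator limit of combinations of the `m* ∘ n`, the operators
in `M` have no common nonzero kernel vector. Applied to the vectors `x (n* a)` this gives
`x ∘ n* = 0`, hence `n ∘ x* = 0` for every `n ∈ M`; applied to the vectors `x* b` it gives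
`x* = 0`. -/

open ContinuousLinearMap

namespace ContinuousLinearMapWOT

variable {𝕜 E F : Type*} [NormedField 𝕜]
  [AddCommGroup E] [TopologicalSpace E] [Module 𝕜 E]
  [AddCommGroup F] [TopologicalSpace F] [Module 𝕜 F]
  [IsTopologicalAddGroup F] [ContinuousConstSMul 𝕜 F]

lemma dual_apply_eq_zero_of_mem_closure_span {S : Set (E →WOT[𝕜] F)} {A : E →WOT[𝕜] F}
    (hA : A ∈ closure (Submodule.span 𝕜 S : Set (E →WOT[𝕜] F))) (v : E) (y : StrongDual 𝕜 F)
    (hS : ∀ T ∈ S, y (T v) = 0) : y (A v) = 0 := by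
  let L : (E →WOT[𝕜] F) →ₗ[𝕜] 𝕜 := (LinearMap.proj (v, y)).comp (inducingFn _ E F)
  have hspan : Submodule.span 𝕜 S ≤ LinearMap.ker L := Submodule.span_le.mpr hS
  have hclosed : IsClosed (LinearMap.ker L : Set (E →WOT[𝕜] F)) :=
    isClosed_eq (continuous_dual_apply v y) continuous_const
  exact hclosed.closure_subset_iff.mpr hspan hA

lemma eq_zero_of_one_mem_closure_span [IsTopologicalAddGroup E] [ContinuousConstSMul 𝕜 E]
    [SeparatingDual 𝕜 E] {S : Set (E →WOT[𝕜] E)}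
    (h1 : (1 : E →WOT[𝕜] E) ∈ closure (Submodule.span 𝕜 S : Set (E →WOT[𝕜] E)))
    {w : E} (hw : ∀ T ∈ S, T w = 0) : w = 0 :=
  SeparatingDual.eq_zero_of_forall_dual_eq_zero (R := 𝕜) fun y =>
    dual_apply_eq_zero_of_mem_closure_span h1 w y fun T hT => by rw [hw T hT, map_zero]

end ContinuousLinearMapWOT

/-- If `M ⊆ B(H,K)` is such that the identity of `H` belongs to the closure, in the weak
operator topology, of the linear span of `{m* ∘ n : m, n ∈ M}`, then any `x ∈ B(H)` with
`m ∘ x ∘ n* = 0` for all `m, n ∈ M` must be zero. -/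
theorem eq_zero_of_tro_essential {H K : Type*}
    [NormedAddCommGroup H] [InnerProductSpace ℂ H] [CompleteSpace H]
    [NormedAddCommGroup K] [InnerProductSpace ℂ K] [CompleteSpace K]
    (M : Set (H →L[ℂ] K))
    (hI : (ContinuousLinearMapWOT.ofCLM : (H →L[ℂ] H) → H →WOT[ℂ] H) (ContinuousLinearMap.id ℂ H) ∈
      closure (↑(Submodule.span ℂ ((ContinuousLinearMapWOT.ofCLM : (H →L[ℂ] H) → H →WOT[ℂ] H) ''
        {T : H →L[ℂ] H | ∃ m ∈ M, ∃ n ∈ M, T = (adjoint m).comp n})) : Set (H →WOT[ℂ] H)))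
    (x : H →L[ℂ] H)
    (hx : ∀ m ∈ M, ∀ n ∈ M, m.comp (x.comp (adjoint n)) = 0) :
    x = 0 := by
  have hsep : ∀ w : H, (∀ n ∈ M, n w = 0) → w = 0 := fun w hw =>
    ContinuousLinearMapWOT.eq_zero_of_one_mem_closure_span hI <| by
      rintro _ ⟨_, ⟨m, -, n, hn, rfl⟩, rfl⟩
      simp [ContinuousLinearMapWOT.ofCLM_apply, hw n hn]
  have hx_adj : ∀ n ∈ M, x.comp (adjoint n) = 0 := fun n hn =>
    ext fun a => hsep _ fun m hm => by simpa using congr($(hx m hm n hn) a)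
  have hadj : adjoint x = 0 := ext fun b => hsep _ fun m hm => by
    simpa using congr($(congr(adjoint $(hx_adj m hm))) b)
  simpa using congr(adjoint $hadj)
end
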